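/- arXiv:2511.12687 — 2 statements merged into one kernel-verified Lean document; each statement's English description precedes it below -/
import Mathlib

section
/- Let 0 < λ < μ, p̂ := μ/(λ+μ), ρ := λ/μ, θ := 2·p̂·(1−p̂) ∈ (0, 1/2), s_* := λ + μ − 2√(λμ), B(s) := (λ + μ + s − √((λ+μ+s)² − 4λμ))/(2λ), and D(s) := (λ+s)(μ+s) − λ·p̂·B(s)·( μ(1+ρ²) + (1+ρ)s ). Then −s_* = (λ+μ)(√(2θ) − 1), and for every real x ≥ √(2θ) − 1: (2/(λ+μ)²)·D((λ+μ)·x) = x² + θ·x + 2θ − 1 + (1 + x − θ)·√((1+x)² − 2θ). Moreover, there exists a unique s_{**} ∈ (0, s_*) such that D(−s_{**}) = 0; D(s) > 0 for all s > −s_{**}; and D is differentiable at −s_{**} with D'(−s_{**}) > 0 (so −s_{**} is a simple zero of D). -/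
/-!
After the substitution `s = (λ + μ) x` the denominator becomes `D s = (λ + μ)² / 2 · f θ x` with
`f θ x = x² + θ x + 2θ − 1 + (1 + x − θ) √((1 + x)² − 2θ)` and `θ = 2λμ / (λ + μ)²`, and the
branch point `−s*` of `B` becomes `x = √(2θ) − 1`. There `f` is negative, while `f 0 > 0`.
At a zero of `f` the relation `f = 0` eliminates the square root from `f'`, and what remains is
a cubic in `y = 1 + x` that is positive for `y ≥ √(2θ)`. So `f` can only cross zero upwards,
hence exactly once, and the crossing is a simple zero.
-/

open Set Filter Topology

section ZeroCrossing

variable {f : ℝ → ℝ}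

theorem exists_first_zero {c d : ℝ} (hcd : c ≤ d) (hf : ContinuousOn f (Icc c d))
    (hc : 0 < f c) (hd : f d ≤ 0) :
    ∃ z ∈ Ioc c d, f z = 0 ∧ ∀ w ∈ Ico c z, 0 < f w := by
  set S := Icc c d ∩ f ⁻¹' Iic 0
  have hS : IsClosed S := hf.preimage_isClosed_of_isClosed isClosed_Icc isClosed_Iic
  have hSbdd : BddBelow S := ⟨c, fun x hx => hx.1.1⟩
  obtain ⟨⟨hcz, hzd⟩, hfz⟩ := hS.csInf_mem ⟨d, ⟨hcd, le_rfl⟩, hd⟩ hSbdd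
  have hbefore : ∀ w ∈ Ico c (sInf S), 0 < f w := fun w hw => by
    by_contra! hfw
    exact hw.2.not_ge (csInf_le hSbdd ⟨⟨hw.1, hw.2.le.trans hzd⟩, hfw⟩)
  have hcz' : c < sInf S := hcz.lt_of_ne fun h => (h ▸ hfz : f c ≤ 0).not_gt hc
  refine ⟨sInf S, ⟨hcz', hzd⟩, le_antisymm hfz ?_, hbefore⟩
  by_contra! hneg
  obtain ⟨w, hw, hfw⟩ := intermediate_value_Icc' hcz
    (hf.mono (Icc_subset_Icc_right hzd)) ⟨hneg.le, hc.le⟩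
  have hwz : w = sInf S := le_antisymm hw.2 (csInf_le hSbdd ⟨⟨hw.1, hw.2.trans hzd⟩, hfw.le⟩)
  exact hneg.ne (hwz ▸ hfw)

theorem eventually_pos_nhdsGT_of_deriv_pos {z : ℝ} (hd : 0 < deriv f z) (hz : f z = 0) :
    ∀ᶠ x in 𝓝[>] z, 0 < f x := by
  filter_upwards [nhdsWithin_le_nhds (eventually_nhdsWithin_sign_eq_of_deriv_pos hd hz),
    self_mem_nhdsWithin] with x hsign (hx : z < x)
  rwa [← sign_eq_one_iff, hsign, sign_eq_one_iff, sub_pos]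

theorem eventually_neg_nhdsLT_of_deriv_pos {z : ℝ} (hd : 0 < deriv f z) (hz : f z = 0) :
    ∀ᶠ x in 𝓝[<] z, f x < 0 := by
  filter_upwards [nhdsWithin_le_nhds (eventually_nhdsWithin_sign_eq_of_deriv_pos hd hz),
    self_mem_nhdsWithin] with x hsign (hx : x < z)
  rwa [← sign_eq_neg_one_iff, hsign, sign_eq_neg_one_iff, sub_neg]

theorem exists_unique_zero_Ioi_of_deriv_pos {a b : ℝ} (hab : a < b)
    (hf : ContinuousOn f (Ici a)) (ha : f a < 0) (hb : 0 < f b)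
    (hderiv : ∀ z, a < z → f z = 0 → 0 < deriv f z) :
    ∃ x₀ ∈ Ioo a b, f x₀ = 0 ∧ (∀ x, a < x → f x = 0 → x = x₀) ∧ ∀ x, x₀ < x → 0 < f x := by
  obtain ⟨x₀, ⟨hax₀, hx₀b⟩, hfx₀, hbefore⟩ := exists_first_zero (f := fun x => -f x) hab.le
    (hf.mono Icc_subset_Ici_self).neg (neg_pos.2 ha) (neg_nonpos.2 hb.le)
  replace hfx₀ : f x₀ = 0 := neg_eq_zero.1 hfx₀
  have hafter : ∀ x, x₀ < x → 0 < f x := by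
    by_contra! ⟨x₁, hx₀x₁, hfx₁⟩
    -- the first zero after a point `w > x₀` with `f w > 0` is approached from above
    obtain ⟨w, hfw, hw⟩ := ((eventually_pos_nhdsGT_of_deriv_pos (hderiv x₀ hax₀ hfx₀)
      hfx₀).and (Ioo_mem_nhdsGT hx₀x₁)).exists
    obtain ⟨z, ⟨hwz, -⟩, hfz, hpos⟩ := exists_first_zero hw.2.le
      (hf.mono fun x hx => (hax₀.trans hw.1).le.trans hx.1) hfw hfx₁
    obtain ⟨v, hfv, hv⟩ := ((eventually_neg_nhdsLT_of_deriv_pos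
      (hderiv z (hax₀.trans (hw.1.trans hwz)) hfz) hfz).and (Ioo_mem_nhdsLT hwz)).exists
    exact (hpos v ⟨hv.1.le, hv.2⟩).not_gt hfv
  refine ⟨x₀, ⟨hax₀, hx₀b.lt_of_ne fun h => hb.ne' (h ▸ hfx₀)⟩, hfx₀, fun x hax hfx => ?_, hafter⟩
  obtain hlt | heq | hgt := lt_trichotomy x x₀
  · exact absurd hfx (neg_pos.1 (hbefore x ⟨hax.le, hlt⟩)).ne
  · exact heq
  · exact absurd hfx (hafter x hgt).ne'

end ZeroCrossing

noncomputable def rescaledDenominator (θ x : ℝ) : ℝ :=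
  x ^ 2 + θ * x + 2 * θ - 1 + (1 + x - θ) * √((1 + x) ^ 2 - 2 * θ)

namespace rescaledDenominator

variable {θ : ℝ}

theorem continuous : Continuous (rescaledDenominator θ) := by
  unfold rescaledDenominator
  fun_prop

theorem hasDerivAt {x : ℝ} (hx : 2 * θ < (1 + x) ^ 2) :
    HasDerivAt (rescaledDenominator θ)
      (2 * x + θ + √((1 + x) ^ 2 - 2 * θ) +
        (1 + x - θ) * (1 + x) / √((1 + x) ^ 2 - 2 * θ)) x := by
  have hq : √((1 + x) ^ 2 - 2 * θ) ≠ 0 := (Real.sqrt_pos.2 (sub_pos.2 hx)).ne'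
  have hlin : HasDerivAt (fun x : ℝ => 1 + x) 1 x := (hasDerivAt_id x).const_add 1
  have hsq : HasDerivAt (fun x : ℝ => (1 + x) ^ 2 - 2 * θ) (2 * (1 + x)) x := by
    simpa using (hlin.fun_pow 2).sub_const (2 * θ)
  have hpoly : HasDerivAt (fun x : ℝ => x ^ 2 + θ * x + 2 * θ - 1) (2 * x + θ) x := by
    simpa using (((hasDerivAt_pow 2 x).add ((hasDerivAt_id x).const_mul θ)).add_const
      (2 * θ)).sub_const 1
  refine (hpoly.add ((hlin.sub_const θ).mul (hsq.sqrt (sub_pos.2 hx).ne'))).congr_deriv ?_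
  field_simp
  ring

theorem transversality_cubic_pos {t y : ℝ} (ht0 : 0 < t) (ht1 : t < 1) (hθ : t ^ 2 = 2 * θ)
    (hy : t ≤ y) :
    0 < 2 * (1 - θ) * y ^ 3 - 4 * θ * y ^ 2 + 5 * θ ^ 2 * y - 2 * θ ^ 2 * (1 - θ) := by
  obtain rfl : θ = t ^ 2 / 2 := by linarith
  -- as a polynomial in `u = y - t`, every coefficient is positive for `0 < t < 1`
  obtain ⟨u, hu, rfl⟩ : ∃ u, 0 ≤ u ∧ y = t + u := ⟨y - t, sub_nonneg.2 hy, by ring⟩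
  have hconst : 0 < t ^ 3 / 4 * ((1 - t) * ((2 - t) * (4 + t))) := by
    have : 0 < 1 - t := by linarith
    have : 0 < 2 - t := by linarith
    positivity
  have hlin : 0 ≤ u * (6 * t ^ 2 - 4 * t ^ 3 - 7 / 4 * t ^ 4) := by
    refine mul_nonneg hu ?_
    nlinarith [mul_pos (mul_pos ht0 ht0) (sub_pos.2 ht1), mul_pos (pow_pos ht0 3) (sub_pos.2 ht1)]
  have hquad : 0 ≤ u ^ 2 * (t * (6 - 2 * t - 3 * t ^ 2)) :=
    mul_nonneg (sq_nonneg u) (mul_nonneg ht0.le (by nlinarith))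
  have hcub : 0 ≤ u ^ 3 * (2 - t ^ 2) := mul_nonneg (pow_nonneg hu 3) (by nlinarith)
  linear_combination hconst + hlin + hquad + hcub

variable (hθ0 : 0 < θ) (hθ1 : θ < 1 / 2)
include hθ0 hθ1

theorem sqrt_two_mul_mem_Ioo : √(2 * θ) ∈ Ioo 0 1 :=
  ⟨Real.sqrt_pos.2 (by linarith), (Real.sqrt_lt' one_pos).2 (by linarith)⟩

theorem deriv_pos_of_eq_zero {x : ℝ} (hx : √(2 * θ) - 1 < x)
    (h0 : rescaledDenominator θ x = 0) : 0 < deriv (rescaledDenominator θ) x := by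
  obtain ⟨ht0, ht1⟩ := sqrt_two_mul_mem_Ioo hθ0 hθ1
  have ht2 : √(2 * θ) ^ 2 = 2 * θ := Real.sq_sqrt (by linarith)
  have hxθ : 2 * θ < (1 + x) ^ 2 := by nlinarith
  rw [(hasDerivAt hxθ).deriv]
  set q := √((1 + x) ^ 2 - 2 * θ)
  have hq : 0 < q := Real.sqrt_pos.2 (sub_pos.2 hxθ)
  have hq2 : q ^ 2 = (1 + x) ^ 2 - 2 * θ := Real.sq_sqrt (sub_pos.2 hxθ).le
  have hV : 0 < 1 + x - θ := by nlinarith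
  have hdq : (2 * x + θ + q + (1 + x - θ) * (1 + x) / q) * q
      = (2 * x + θ) * q + q ^ 2 + (1 + x - θ) * (1 + x) := by
    field_simp
  unfold rescaledDenominator at h0
  have hkey : (2 * x + θ + q + (1 + x - θ) * (1 + x) / q) * (q ^ 2 * (1 + x - θ))
      = 2 * (1 - θ) * (1 + x) ^ 3 - 4 * θ * (1 + x) ^ 2 + 5 * θ ^ 2 * (1 + x)
        - 2 * θ ^ 2 * (1 - θ) := by
    linear_combination (q * (1 + x - θ)) * hdq
      + ((2 * x + θ) * (1 + x - θ) + q * (1 + x - θ)) * hq2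
      + ((1 + x) ^ 2 - 2 * θ + (1 + x - θ) * (1 + x)) * h0
  have hcubic := transversality_cubic_pos ht0 ht1 ht2 (by linarith : √(2 * θ) ≤ 1 + x)
  rw [← hkey] at hcubic
  exact pos_of_mul_pos_left hcubic (by positivity)

theorem apply_sqrt_two_mul_sub_one_neg : rescaledDenominator θ (√(2 * θ) - 1) < 0 := by
  obtain ⟨ht0, ht1⟩ := sqrt_two_mul_mem_Ioo hθ0 hθ1
  have ht2 : √(2 * θ) ^ 2 = 2 * θ := Real.sq_sqrt (by linarith)
  have hbranch : (1 + (√(2 * θ) - 1)) ^ 2 - 2 * θ = 0 := by linarith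
  rw [rescaledDenominator, hbranch, Real.sqrt_zero, mul_zero, add_zero]
  nlinarith [mul_pos ht0 (mul_pos (sub_pos.2 ht1) (by linarith : (0 : ℝ) < 4 + √(2 * θ)))]

theorem apply_zero_pos : 0 < rescaledDenominator θ 0 := by
  have hlt : √(1 - 2 * θ) < 1 - θ := (Real.sqrt_lt' (by linarith)).2 (by nlinarith)
  have hpos : 0 < √(1 - 2 * θ) := Real.sqrt_pos.2 (by linarith)
  have hsq : √(1 - 2 * θ) ^ 2 = 1 - 2 * θ := Real.sq_sqrt (by linarith)
  rw [rescaledDenominator, show (1 + (0 : ℝ)) ^ 2 - 2 * θ = 1 - 2 * θ by ring]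
  nlinarith

theorem exists_unique_simple_zero_of_rescale {c L : ℝ} {D : ℝ → ℝ} (hc : 0 < c) (hL : 0 < L)
    (hD : D = fun s => c * rescaledDenominator θ (L⁻¹ * s)) :
    ∃ x₀ ∈ Ioo (L * (√(2 * θ) - 1)) 0, D x₀ = 0 ∧
      (∀ x, L * (√(2 * θ) - 1) < x → D x = 0 → x = x₀) ∧ (∀ x, x₀ < x → 0 < D x) ∧
      0 < deriv D x₀ := by
  have hD_mul (x : ℝ) : D (L * x) = c * rescaledDenominator θ x := by
    simp only [hD, inv_mul_cancel_left₀ hL.ne']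
  have hderiv (z : ℝ) (hz : L * (√(2 * θ) - 1) < z) (hDz : D z = 0) : 0 < deriv D z := by
    rw [hD] at hDz ⊢
    rw [deriv_const_mul_field, deriv_comp_mul_left, smul_eq_mul]
    exact mul_pos hc (mul_pos (inv_pos.2 hL) (deriv_pos_of_eq_zero hθ0 hθ1
      ((lt_inv_mul_iff₀ hL).2 hz) ((mul_eq_zero.1 hDz).resolve_left hc.ne')))
  obtain ⟨x₀, hx₀, hDx₀, huniq, hpos⟩ := exists_unique_zero_Ioi_of_deriv_pos
    (mul_neg_of_pos_of_neg hL (by linarith [(sqrt_two_mul_mem_Ioo hθ0 hθ1).2]))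
    (hD ▸ (continuous_const.mul (continuous.comp (continuous_const.mul continuous_id))).continuousOn)
    (by rw [hD_mul]; exact mul_neg_of_pos_of_neg hc (apply_sqrt_two_mul_sub_one_neg hθ0 hθ1))
    (by simp only [hD, mul_zero]; exact mul_pos hc (apply_zero_pos hθ0 hθ1))
    hderiv
  exact ⟨x₀, hx₀, hDx₀, huniq, hpos, hderiv x₀ hx₀.1 hDx₀⟩

end rescaledDenominator

section Parameters

variable {lam mu : ℝ}

theorem two_mul_mul_div_add_sq_mem_Ioo (hlam : 0 < lam) (hmu : lam < mu) :
    2 * lam * mu / (lam + mu) ^ 2 ∈ Ioo 0 (1 / 2) := by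
  have hmu0 : 0 < mu := hlam.trans hmu
  refine ⟨by positivity, ?_⟩
  rw [div_lt_iff₀ (by positivity)]
  nlinarith [sq_pos_of_ne_zero (sub_ne_zero.2 hmu.ne)]

theorem add_mul_sqrt_two_mul_div_add_sq (hlam : 0 < lam) (hmu : 0 < mu) :
    (lam + mu) * √(2 * (2 * lam * mu / (lam + mu) ^ 2)) = 2 * √(lam * mu) := by
  have hsq : (lam + mu) ^ 2 * (2 * (2 * lam * mu / (lam + mu) ^ 2)) = (2 * √(lam * mu)) ^ 2 := by
    rw [mul_pow, Real.sq_sqrt (by positivity)]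
    field_simp
  calc (lam + mu) * √(2 * (2 * lam * mu / (lam + mu) ^ 2))
      = √((lam + mu) ^ 2 * (2 * (2 * lam * mu / (lam + mu) ^ 2))) := by
        rw [Real.sqrt_mul (sq_nonneg _), Real.sqrt_sq (add_pos hlam hmu).le]
    _ = 2 * √(lam * mu) := by rw [hsq, Real.sqrt_sq (by positivity)]

theorem denominator_eq_rescaled (hlam : 0 < lam) (hmu : 0 < mu) (s : ℝ) :
    (lam + s) * (mu + s) - lam * (mu / (lam + mu)) *
        ((lam + mu + s - √((lam + mu + s) ^ 2 - 4 * lam * mu)) / (2 * lam)) *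
        (mu * (1 + (lam / mu) ^ 2) + (1 + lam / mu) * s) =
      (lam + mu) ^ 2 / 2 *
        rescaledDenominator (2 * lam * mu / (lam + mu) ^ 2) ((lam + mu)⁻¹ * s) := by
  have hL : 0 < lam + mu := add_pos hlam hmu
  have hdisc : (lam + mu + s) ^ 2 - 4 * lam * mu = (lam + mu) ^ 2 *
      ((1 + (lam + mu)⁻¹ * s) ^ 2 - 2 * (2 * lam * mu / (lam + mu) ^ 2)) := by
    field_simp
    ring
  rw [rescaledDenominator, hdisc, Real.sqrt_mul (sq_nonneg _), Real.sqrt_sq hL.le]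
  field_simp
  ring

end Parameters

/-- The denominator `D` of the Laplace transform of the time to consensus
in the stylized Bitcoin model has a unique (simple) zero `-s**` with `s** ∈ (0, s*)`, and `D`
is positive to the right of it; moreover the rescaling identity
`(2/(λ+μ)²)·D((λ+μ)x) = x² + θx + 2θ − 1 + (1+x−θ)·√((1+x)² − 2θ)` holds for
`x ≥ √(2θ) − 1`, where `θ = 2p̂(1−p̂)` and `−s* = (λ+μ)(√(2θ) − 1)`. -/
theorem stmt18 (lam mu phat rho theta sstar : ℝ) (hlam : 0 < lam) (hmu : lam < mu)
    (hphat : phat = mu / (lam + mu)) (hrho : rho = lam / mu)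
    (htheta : theta = 2 * phat * (1 - phat))
    (hsstar : sstar = lam + mu - 2 * Real.sqrt (lam * mu))
    (B D : ℝ → ℝ)
    (hB : B = fun s => (lam + mu + s - Real.sqrt ((lam + mu + s) ^ 2 - 4 * lam * mu)) / (2 * lam))
    (hD : D = fun s =>
      (lam + s) * (mu + s) - lam * phat * B s * (mu * (1 + rho ^ 2) + (1 + rho) * s)) :
    theta ∈ Set.Ioo (0 : ℝ) (1 / 2) ∧
    -sstar = (lam + mu) * (Real.sqrt (2 * theta) - 1) ∧
    (∀ x : ℝ, Real.sqrt (2 * theta) - 1 ≤ x →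
      2 / (lam + mu) ^ 2 * D ((lam + mu) * x) =
        x ^ 2 + theta * x + 2 * theta - 1 +
          (1 + x - theta) * Real.sqrt ((1 + x) ^ 2 - 2 * theta)) ∧
    (∃ sss : ℝ, 0 < sss ∧ sss < sstar ∧ D (-sss) = 0 ∧
      (∀ s : ℝ, 0 < s → s < sstar → D (-s) = 0 → s = sss) ∧
      (∀ s : ℝ, -sss < s → 0 < D s) ∧
      DifferentiableAt ℝ D (-sss) ∧ 0 < deriv D (-sss)) := by
  have hmu0 : 0 < mu := hlam.trans hmu
  have hL : 0 < lam + mu := add_pos hlam hmu0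
  have hθ : theta = 2 * lam * mu / (lam + mu) ^ 2 := by
    rw [htheta, hphat]
    field_simp
    ring
  obtain ⟨hθ0, hθ1⟩ := hθ ▸ two_mul_mul_div_add_sq_mem_Ioo hlam hmu
  have hsstar' : -sstar = (lam + mu) * (√(2 * theta) - 1) := by
    rw [hsstar, mul_sub, hθ, add_mul_sqrt_two_mul_div_add_sq hlam hmu0]
    ring
  have hDf : D = fun s => (lam + mu) ^ 2 / 2 * rescaledDenominator theta ((lam + mu)⁻¹ * s) := by
    subst hD hB hphat hrho hθ
    exact funext (denominator_eq_rescaled hlam hmu0)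
  obtain ⟨x₀, ⟨hx₀a, hx₀0⟩, hDx₀, huniq, hpos, hderiv⟩ :=
    rescaledDenominator.exists_unique_simple_zero_of_rescale hθ0 hθ1 (by positivity) hL hDf
  rw [← hsstar'] at hx₀a huniq
  refine ⟨⟨hθ0, hθ1⟩, hsstar', fun x _ => ?_, -x₀, by linarith, by linarith, by rwa [neg_neg],
    fun s hs0 hs hDs => ?_, by rwa [neg_neg], ?_⟩
  · simp only [hDf, inv_mul_cancel_left₀ hL.ne', rescaledDenominator]
    field_simp
  · linarith [huniq (-s) (by linarith) hDs]
  · rw [neg_neg]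
    exact ⟨differentiableAt_of_deriv_ne_zero hderiv.ne', hderiv⟩
end

section
/- For θ ∈ (0, 1/2), define g(x) := x² + θ·x + 2θ − 1 + (1 + x − θ)·√((1+x)² − 2θ) for x ≥ √(2θ) − 1. Then: (i) g(√(2θ) − 1) = 3θ − (2−θ)√(2θ) = (√(2θ) − 1)(θ + 2√(2θ)) < 0; (ii) g(0) = √(1−2θ)·(1 − θ − √(1−2θ)) > 0; (iii) g'(x) > 0 for all x ≥ 0; (iv) g has a unique zero x_* in [√(2θ) − 1, ∞), this zero satisfies √(2θ) − 1 < x_* < 0, g'(x_*) > 0, and g(x) > 0 for all x > x_*. -/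
/-!
Write `u = 1 + x`, `r = √(2θ)`, `p(x) = x² + θx + 2θ − 1` and `s(x) = √(u² − 2θ)`, so that
`g = p + (u − θ) s`. The two boundary values are direct computations (at `x = r − 1` the square
root vanishes). For `x > max (r − 1) (−θ/2)` every term of
`g' = 2x + θ + s + (u − θ) u / s` is positive, so `g` is strictly increasing there. On the
remaining piece `[r − 1, −θ/2]` the polynomial part is negative and dominates the square-root
part, because `p² − (u − θ)² s²` is positive there; hence `g < 0` on that piece. The zero given
by the intermediate value theorem on `[r − 1, 0]` therefore lies in the increasing region, which
yields its uniqueness, `g'(x*) > 0` and `g > 0` beyond it.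
-/

open Real Set

namespace ConsensusLaplace

/-- The rescaled denominator `g` of the Laplace transform of the time to consensus. -/
noncomputable def denom (θ x : ℝ) : ℝ :=
  x ^ 2 + θ * x + 2 * θ - 1 + (1 + x - θ) * √((1 + x) ^ 2 - 2 * θ)

section

variable {θ : ℝ}

lemma sqrt_two_mul_lt_one (hθ : θ < 1 / 2) : √(2 * θ) < 1 := by
  rw [sqrt_lt' one_pos]
  linarith

lemma denom_sqrt_sub_one (hθ : 0 ≤ θ) :
    denom θ (√(2 * θ) - 1) = 3 * θ - (2 - θ) * √(2 * θ) := by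
  have hr : √(2 * θ) ^ 2 = 2 * θ := sq_sqrt (by positivity)
  rw [denom, show (1 + (√(2 * θ) - 1)) ^ 2 - 2 * θ = 0 by linear_combination hr, sqrt_zero]
  linear_combination hr

lemma denom_sqrt_sub_one_eq_mul (hθ : 0 ≤ θ) :
    denom θ (√(2 * θ) - 1) = (√(2 * θ) - 1) * (θ + 2 * √(2 * θ)) := by
  rw [denom_sqrt_sub_one hθ]
  linear_combination (-2 : ℝ) * sq_sqrt (by positivity : (0 : ℝ) ≤ 2 * θ)

lemma denom_sqrt_sub_one_neg (h₀ : 0 < θ) (h₁ : θ < 1 / 2) : denom θ (√(2 * θ) - 1) < 0 := by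
  rw [denom_sqrt_sub_one_eq_mul h₀.le]
  exact mul_neg_of_neg_of_pos (by linarith [sqrt_two_mul_lt_one h₁]) (by positivity)

lemma denom_zero (hθ : 2 * θ ≤ 1) :
    denom θ 0 = √(1 - 2 * θ) * (1 - θ - √(1 - 2 * θ)) := by
  rw [denom, show (1 + (0 : ℝ)) ^ 2 - 2 * θ = 1 - 2 * θ by ring]
  linear_combination sq_sqrt (by linarith : (0 : ℝ) ≤ 1 - 2 * θ)

lemma denom_zero_pos (h₀ : 0 < θ) (h₁ : θ < 1 / 2) : 0 < denom θ 0 := by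
  rw [denom_zero (by linarith)]
  have hlt : √(1 - 2 * θ) < 1 - θ := (sqrt_lt' (by linarith)).2 (by nlinarith)
  exact mul_pos (sqrt_pos.2 (by linarith)) (by linarith)

lemma continuous_denom (θ : ℝ) : Continuous (denom θ) := by
  unfold denom
  fun_prop

lemma hasDerivAt_denom {x : ℝ} (hx : 2 * θ < (1 + x) ^ 2) :
    HasDerivAt (denom θ) (2 * x + θ + √((1 + x) ^ 2 - 2 * θ) +
      (1 + x - θ) * ((1 + x) / √((1 + x) ^ 2 - 2 * θ))) x := by
  have hrad : HasDerivAt (fun y : ℝ => (1 + y) ^ 2 - 2 * θ) (2 * (1 + x)) x := by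
    simpa using (((hasDerivAt_id x).const_add 1).pow 2).sub_const (2 * θ)
  have hsqrt : HasDerivAt (fun y : ℝ => √((1 + y) ^ 2 - 2 * θ))
      (1 / (2 * √((1 + x) ^ 2 - 2 * θ)) * (2 * (1 + x))) x :=
    (hasDerivAt_sqrt (sub_pos.2 hx).ne').comp x hrad
  have hpoly : HasDerivAt (fun y : ℝ => y ^ 2 + θ * y + 2 * θ - 1) (2 * x + θ) x := by
    simpa using
      (((hasDerivAt_pow 2 x).add ((hasDerivAt_id x).const_mul θ)).add_const (2 * θ)).sub_const 1
  have hlin : HasDerivAt (fun y : ℝ => 1 + y - θ) 1 x := by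
    simpa using ((hasDerivAt_id x).const_add 1).sub_const θ
  have hs : √((1 + x) ^ 2 - 2 * θ) ≠ 0 := (sqrt_pos.2 (sub_pos.2 hx)).ne'
  refine (hpoly.add (hlin.mul hsqrt)).congr_deriv ?_
  field_simp
  ring

lemma two_mul_lt_sq_of_sqrt_sub_one_lt {x : ℝ} (hx : √(2 * θ) - 1 < x) :
    2 * θ < (1 + x) ^ 2 := by
  calc 2 * θ ≤ √(2 * θ) ^ 2 := by rw [sq_sqrt']; exact le_max_left _ _
    _ < (1 + x) ^ 2 := pow_lt_pow_left₀ (by linarith) (sqrt_nonneg _) two_ne_zero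

lemma deriv_denom_pos (h₁ : θ < 1 / 2) {x : ℝ} (hx : max (√(2 * θ) - 1) (-(θ / 2)) < x) :
    0 < deriv (denom θ) x := by
  obtain ⟨hxr, hxθ⟩ := max_lt_iff.1 hx
  have hrad := two_mul_lt_sq_of_sqrt_sub_one_lt hxr
  have hs : 0 < √((1 + x) ^ 2 - 2 * θ) := sqrt_pos.2 (sub_pos.2 hrad)
  rw [(hasDerivAt_denom hrad).deriv]
  have hlast : 0 < (1 + x - θ) * ((1 + x) / √((1 + x) ^ 2 - 2 * θ)) :=
    mul_pos (by linarith) (div_pos (by linarith) hs)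
  linarith

lemma strictMonoOn_denom (h₁ : θ < 1 / 2) :
    StrictMonoOn (denom θ) (Ici (max (√(2 * θ) - 1) (-(θ / 2)))) := by
  refine strictMonoOn_of_deriv_pos (convex_Ici _) (continuous_denom θ).continuousOn ?_
  rw [interior_Ici]
  exact fun x hx => deriv_denom_pos h₁ hx

lemma sq_mul_lt_sq (h₀ : 0 < θ) (h₁ : θ < 1 / 2) {x : ℝ}
    (hw : θ ≤ (1 - θ) * (1 + x)) (hx : x ≤ -(θ / 2)) :
    (1 + x - θ) ^ 2 * ((1 + x) ^ 2 - 2 * θ) < (x ^ 2 + θ * x + 2 * θ - 1) ^ 2 := by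
  set w := (1 - θ) * (1 + x) - θ
  have key : (1 - θ) * ((x ^ 2 + θ * x + 2 * θ - 1) ^ 2 -
        (1 + x - θ) ^ 2 * ((1 + x) ^ 2 - 2 * θ)) =
      4 * (1 - θ) * (1 + x) * w * (-(θ / 2) - x) + θ * (2 * w ^ 2 + θ * (1 - 2 * θ) * (1 + θ)) := by
    ring
  have hrhs : 0 < 4 * (1 - θ) * (1 + x) * w * (-(θ / 2) - x) +
      θ * (2 * w ^ 2 + θ * (1 - 2 * θ) * (1 + θ)) := by
    have h₂ : 0 ≤ 4 * (1 - θ) * (1 + x) * w * (-(θ / 2) - x) :=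
      mul_nonneg (mul_nonneg (by nlinarith) (by linarith)) (by linarith)
    have h₃ : 0 < θ * (1 - 2 * θ) * (1 + θ) := by
      apply mul_pos (mul_pos h₀ _) <;> linarith
    exact add_pos_of_nonneg_of_pos h₂ (mul_pos h₀ (add_pos_of_nonneg_of_pos (by positivity) h₃))
  rw [← key] at hrhs
  exact sub_pos.1 (pos_of_mul_pos_right hrhs (by linarith))

lemma denom_neg_of_le (h₀ : 0 < θ) (h₁ : θ < 1 / 2) {x : ℝ} (hxr : √(2 * θ) - 1 ≤ x)
    (hxθ : x ≤ -(θ / 2)) : denom θ x < 0 := by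
  set r := √(2 * θ)
  have hr : r ^ 2 = 2 * θ := sq_sqrt (by positivity)
  have hpoly : x ^ 2 + θ * x + 2 * θ - 1 < 0 := by
    -- `p` decreases on `[r - 1, -θ/2]`, which lies left of its vertex `-θ/2`
    have hdiff : x ^ 2 + θ * x + 2 * θ - 1 - (3 * θ - (2 - θ) * r) =
        (x - (r - 1)) * (x + (r - 1) + θ) := by
      linear_combination hr
    have hdiff_nonpos : (x - (r - 1)) * (x + (r - 1) + θ) ≤ 0 :=
      mul_nonpos_of_nonneg_of_nonpos (by linarith) (by linarith)
    have hp := denom_sqrt_sub_one_neg h₀ h₁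
    rw [denom_sqrt_sub_one h₀.le] at hp
    linarith
  have hr₀ : 0 ≤ r := sqrt_nonneg _
  have hθr : θ ≤ (1 - θ) * r := by
    refine le_of_sq_le_sq ?_ (mul_nonneg (by linarith) hr₀)
    have : 0 < θ * ((2 - θ) * (1 - 2 * θ)) := mul_pos h₀ (mul_pos (by linarith) (by linarith))
    rw [mul_pow, hr]
    linarith
  have hw : θ ≤ (1 - θ) * (1 + x) := 
    hθr.trans (mul_le_mul_of_nonneg_left (by linarith) (by linarith))
  have hrad : 0 ≤ (1 + x) ^ 2 - 2 * θ := by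
    rw [← hr, sub_nonneg]
    exact pow_le_pow_left₀ hr₀ (by linarith) 2
  have hsq : ((1 + x - θ) * √((1 + x) ^ 2 - 2 * θ)) ^ 2 < (-(x ^ 2 + θ * x + 2 * θ - 1)) ^ 2 := by
    rw [mul_pow, sq_sqrt hrad, neg_sq]
    exact sq_mul_lt_sq h₀ h₁ hw hxθ
  have hlt := lt_of_pow_lt_pow_left₀ 2 (by linarith) hsq
  rw [denom]
  linarith

lemma max_lt_of_denom_nonneg (h₀ : 0 < θ) (h₁ : θ < 1 / 2) {x : ℝ} (hxr : √(2 * θ) - 1 ≤ x)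
    (hx : 0 ≤ denom θ x) : max (√(2 * θ) - 1) (-(θ / 2)) < x := by
  by_contra! hle
  rcases le_max_iff.1 hle with hxr' | hxθ
  · rw [le_antisymm hxr' hxr] at hx
    exact (denom_sqrt_sub_one_neg h₀ h₁).not_ge hx
  · exact (denom_neg_of_le h₀ h₁ hxr hxθ).not_ge hx

end

end ConsensusLaplace

open ConsensusLaplace in
/-- Properties of the rescaled denominator
`g(x) = x² + θx + 2θ − 1 + (1+x−θ)√((1+x)² − 2θ)` for `θ ∈ (0, 1/2)`:
its values at `√(2θ) − 1` and `0`, positivity of `g'` on `[0, ∞)`, and its unique zero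
`x* ∈ (√(2θ) − 1, 0)`, at which `g' > 0`, with `g > 0` to the right of `x*`. -/
theorem stmt19 (theta : ℝ) (htheta : theta ∈ Set.Ioo (0 : ℝ) (1 / 2))
    (g : ℝ → ℝ)
    (hg : g = fun x => x ^ 2 + theta * x + 2 * theta - 1 +
      (1 + x - theta) * Real.sqrt ((1 + x) ^ 2 - 2 * theta)) :
    (g (Real.sqrt (2 * theta) - 1) = 3 * theta - (2 - theta) * Real.sqrt (2 * theta) ∧
      g (Real.sqrt (2 * theta) - 1) =
        (Real.sqrt (2 * theta) - 1) * (theta + 2 * Real.sqrt (2 * theta)) ∧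
      g (Real.sqrt (2 * theta) - 1) < 0) ∧
    (g 0 = Real.sqrt (1 - 2 * theta) * (1 - theta - Real.sqrt (1 - 2 * theta)) ∧ 0 < g 0) ∧
    (∀ x : ℝ, 0 ≤ x → 0 < deriv g x) ∧
    (∃ xstar : ℝ, Real.sqrt (2 * theta) - 1 < xstar ∧ xstar < 0 ∧ g xstar = 0 ∧
      (∀ x : ℝ, Real.sqrt (2 * theta) - 1 ≤ x → g x = 0 → x = xstar) ∧
      0 < deriv g xstar ∧
      (∀ x : ℝ, xstar < x → 0 < g x)) := by
  obtain ⟨h₀, h₁⟩ := htheta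
  obtain rfl : g = denom theta := hg
  have hleft := denom_sqrt_sub_one_neg h₀ h₁
  have hr := sqrt_two_mul_lt_one h₁
  obtain ⟨xstar, ⟨hlo, hhi⟩, hzero⟩ := intermediate_value_Ioo (by linarith)
    (continuous_denom theta).continuousOn ⟨hleft, denom_zero_pos h₀ h₁⟩
  have hstar := max_lt_of_denom_nonneg h₀ h₁ hlo.le hzero.ge
  refine ⟨⟨denom_sqrt_sub_one h₀.le, denom_sqrt_sub_one_eq_mul h₀.le, hleft⟩,
    ⟨denom_zero (by linarith), denom_zero_pos h₀ h₁⟩,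
    fun x hx => deriv_denom_pos h₁ (max_lt (by linarith) (by linarith)),
    xstar, hlo, hhi, hzero, fun x hx hx0 => ?_, deriv_denom_pos h₁ hstar, fun x hx => ?_⟩
  · exact (strictMonoOn_denom h₁).injOn
      (max_lt_of_denom_nonneg h₀ h₁ hx hx0.ge).le hstar.le (hx0.trans hzero.symm)
  · simpa [hzero] using (strictMonoOn_denom h₁) hstar.le (hstar.trans hx).le hx
end
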